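/- For every n ≥ 1, the eigenspace {v : (Fin n → Fin 2) → ℂ | M_n.mulVec v = (2^(n−1) : ℂ) • v} is a one-dimensional ℂ-subspace, spanned by GHZ_n; likewise the eigenspace {v | M_n.mulVec v = (−2^(n−1) : ℂ) • v} is one-dimensional, spanned by GHZ'_n. (Only the GHZ state maximally violates the MABK inequality, and only the phase-flipped GHZ state attains the minimal value.) -/

import Mathlib

open Matrix BigOperators

noncomputable section

/-- Pauli X matrix. -/
def pauliX : Matrix (Fin 2) (Fin 2) ℂ := !![0, 1; 1, 0]

/-- Pauli Y matrix. -/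
def pauliY : Matrix (Fin 2) (Fin 2) ℂ := !![0, -Complex.I; Complex.I, 0]

/-- n-fold tensor (Kronecker) product of a family of 2×2 matrices,
defined entrywise by `T(A) f g = ∏ j, (A j) (f j) (g j)`. -/
def tensor {n : ℕ} (A : Fin n → Matrix (Fin 2) (Fin 2) ℂ) :
    Matrix (Fin n → Fin 2) (Fin n → Fin 2) ℂ :=
  Matrix.of fun f g => ∏ j, A j (f j) (g j)

/-- The n-partite MABK operator
`M_n = (1/(2i)) (⊗ⱼ (X + iY) − ⊗ⱼ (X − iY))`. -/
def MABK (n : ℕ) : Matrix (Fin n → Fin 2) (Fin n → Fin 2) ℂ :=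
  (1 / (2 * Complex.I)) •
    (tensor (fun _ : Fin n => pauliX + Complex.I • pauliY)
      - tensor (fun _ : Fin n => pauliX - Complex.I • pauliY))

/-- The n-qubit GHZ state `(|0…0⟩ + i|1…1⟩)/√2`. -/
def GHZ (n : ℕ) : (Fin n → Fin 2) → ℂ :=
  fun f =>
    if f = fun _ => 0 then 1 / (Real.sqrt 2 : ℂ)
    else if f = fun _ => 1 then Complex.I / (Real.sqrt 2 : ℂ)
    else 0

/-- The phase-flipped n-qubit GHZ state `(|0…0⟩ − i|1…1⟩)/√2`. -/
def GHZ' (n : ℕ) : (Fin n → Fin 2) → ℂ :=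
  fun f =>
    if f = fun _ => 0 then 1 / (Real.sqrt 2 : ℂ)
    else if f = fun _ => 1 then -Complex.I / (Real.sqrt 2 : ℂ)
    else 0

/-!
Since `X + iY = 2 |0⟩⟨1|` and `X − iY = 2 |1⟩⟨0|`, the two tensor products are
`2ⁿ |0…0⟩⟨1…1|` and `2ⁿ |1…1⟩⟨0…0|`, so `M_n = 2ⁿ⁻¹ (−i |0…0⟩⟨1…1| + i |1…1⟩⟨0…0|)`.
For `n ≥ 1` the two basis states are distinct, so `M_n` acts as `2ⁿ⁻¹ σ_y` on their span
and as zero on the other basis states. An eigenvector for `±2ⁿ⁻¹ ≠ 0` therefore vanishes off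
`{|0…0⟩, |1…1⟩}`, and its `|1…1⟩`-coordinate is `±i` times its `|0…0⟩`-coordinate.
-/

namespace Matrix

variable {ι K : Type*} [DecidableEq ι]

theorem single_add_single_mulVec [Fintype ι] [NonUnitalNonAssocSemiring K] (a b : ι) (p q : K)
    (v : ι → K) :
    (single a b p + single b a q) *ᵥ v = Pi.single a (p * v b) + Pi.single b (q * v a) := by
  rw [add_mulVec, single_mulVec, single_mulVec]
  rfl

variable [Field K]

theorem finrank_span_single_one_add_single {a b : ι} (hab : a ≠ b) (w : K) :
    Module.finrank K (K ∙ (Pi.single a 1 + Pi.single b w : ι → K)) = 1 := by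
  refine finrank_span_singleton fun h => ?_
  simpa [hab] using congrFun h a

/- `w` is the ratio of the `b`- to the `a`-coordinate of the eigenvector; the two hypotheses
force `μ² = p q`. -/
theorem single_add_single_mulVec_eq_smul_iff [Fintype ι] {a b : ι} (hab : a ≠ b) {p q μ w : K}
    (hμ : μ ≠ 0) (hp : p * w = μ) (hq : q = μ * w) (v : ι → K) :
    (single a b p + single b a q) *ᵥ v = μ • v ↔ v ∈ K ∙ (Pi.single a 1 + Pi.single b w) := by
  rw [single_add_single_mulVec, Submodule.mem_span_singleton]
  constructor
  · intro h
    have hp0 : p ≠ 0 := left_ne_zero_of_mul (hp ▸ hμ)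
    refine ⟨v a, funext fun f => ?_⟩
    rcases eq_or_ne f a with rfl | hfa
    · simp [hab]
    rcases eq_or_ne f b with rfl | hfb
    · have ha := congrFun h a
      simp only [Pi.add_apply, Pi.single_eq_same, Pi.single_eq_of_ne hab, Pi.smul_apply,
        smul_eq_mul] at ha
      simp only [Pi.smul_apply, Pi.add_apply, Pi.single_eq_same, Pi.single_eq_of_ne hfa,
        smul_eq_mul]
      apply mul_left_cancel₀ hp0
      linear_combination v a * hp - ha
    · have hf := congrFun h f
      simp_all
  · rintro ⟨t, rfl⟩
    subst hp hq
    funext f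
    simp only [Pi.add_apply, Pi.smul_apply, Pi.single_apply, smul_eq_mul]
    split_ifs <;> simp_all <;> ring

end Matrix

theorem pauliX_add_I_smul_pauliY : pauliX + Complex.I • pauliY = single 0 1 2 := by
  ext i j
  fin_cases i <;> fin_cases j <;> simp [pauliX, pauliY]; ring

theorem pauliX_sub_I_smul_pauliY : pauliX - Complex.I • pauliY = single 1 0 2 := by
  ext i j
  fin_cases i <;> fin_cases j <;> simp [pauliX, pauliY]; ring

theorem tensor_single {n : ℕ} (a b : Fin n → Fin 2) (c : Fin n → ℂ) :
    tensor (fun j => single (a j) (b j) (c j)) = single a b (∏ j, c j) := by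
  ext f g
  simp only [tensor, of_apply, single_apply, Fintype.prod_ite_zero, funext_iff, forall_and]

theorem const_zero_ne_const_one {n : ℕ} (hn : 1 ≤ n) :
    (fun _ : Fin n => (0 : Fin 2)) ≠ fun _ => 1 := fun h =>
  zero_ne_one (congrFun h ⟨0, hn⟩)

theorem MABK_eq_single_add_single {n : ℕ} (hn : 1 ≤ n) :
    MABK n = single (fun _ => 0) (fun _ => 1) (-Complex.I * 2 ^ (n - 1))
      + single (fun _ => 1) (fun _ => 0) (Complex.I * 2 ^ (n - 1)) := by
  obtain ⟨m, rfl⟩ := Nat.exists_eq_add_of_le' hn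
  have key : (1 / (2 * Complex.I)) * 2 ^ (m + 1) = -Complex.I * 2 ^ m := by
    rw [pow_succ, one_div, mul_inv, Complex.inv_I]
    ring
  rw [MABK, pauliX_add_I_smul_pauliY, pauliX_sub_I_smul_pauliY,
    tensor_single (fun _ => 0) (fun _ => 1) (fun _ => 2),
    tensor_single (fun _ => 1) (fun _ => 0) (fun _ => 2)]
  simp only [Finset.prod_const, Finset.card_univ, Fintype.card_fin, smul_sub, smul_single,
    smul_eq_mul, key, Nat.add_sub_cancel]
  rw [sub_eq_add_neg, single_neg, neg_mul, neg_neg]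

theorem GHZ_eq {n : ℕ} (hn : 1 ≤ n) :
    GHZ n = (Real.sqrt 2 : ℂ)⁻¹ •
      (Pi.single (fun _ => 0) 1 + Pi.single (fun _ => 1) Complex.I) := by
  funext f
  have h01 := const_zero_ne_const_one hn
  by_cases h0 : f = fun _ => 0
  · subst h0; simp [GHZ, h01]
  by_cases h1 : f = fun _ => 1
  · subst h1; simp [GHZ, h01.symm]; ring
  · simp [GHZ, h0, h1]

theorem GHZ'_eq {n : ℕ} (hn : 1 ≤ n) :
    GHZ' n = (Real.sqrt 2 : ℂ)⁻¹ •
      (Pi.single (fun _ => 0) 1 + Pi.single (fun _ => 1) (-Complex.I)) := by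
  funext f
  have h01 := const_zero_ne_const_one hn
  by_cases h0 : f = fun _ => 0
  · subst h0; simp [GHZ', h01]
  by_cases h1 : f = fun _ => 1
  · subst h1; simp [GHZ', h01.symm]; ring
  · simp [GHZ', h0, h1]

/-- The eigenspaces of the MABK operator for the extreme eigenvalues ±2^(n−1)
are one-dimensional, spanned by the GHZ and phase-flipped GHZ states. -/
theorem mabk_eigenspaces (n : ℕ) (hn : 1 ≤ n) :
    ({v : (Fin n → Fin 2) → ℂ | (MABK n).mulVec v = (2 ^ (n - 1) : ℂ) • v}
        = ↑(Submodule.span ℂ {GHZ n})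
      ∧ Module.finrank ℂ (Submodule.span ℂ {GHZ n}) = 1) ∧
    ({v : (Fin n → Fin 2) → ℂ | (MABK n).mulVec v = (-(2 ^ (n - 1)) : ℂ) • v}
        = ↑(Submodule.span ℂ {GHZ' n})
      ∧ Module.finrank ℂ (Submodule.span ℂ {GHZ' n}) = 1) := by
  have h01 := const_zero_ne_const_one hn
  have hμ : (2 : ℂ) ^ (n - 1) ≠ 0 := pow_ne_zero _ two_ne_zero
  have hsqrt : IsUnit ((Real.sqrt 2 : ℂ)⁻¹) := by simp
  rw [GHZ_eq hn, GHZ'_eq hn, Submodule.span_singleton_smul_eq hsqrt,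
    Submodule.span_singleton_smul_eq hsqrt, MABK_eq_single_add_single hn]
  refine ⟨⟨?_, finrank_span_single_one_add_single h01 _⟩,
    ⟨?_, finrank_span_single_one_add_single h01 _⟩⟩ <;> ext v
  · exact single_add_single_mulVec_eq_smul_iff h01 hμ
      (by linear_combination (-2 ^ (n - 1) : ℂ) * Complex.I_sq) (by ring) v
  · exact single_add_single_mulVec_eq_smul_iff h01 (neg_ne_zero.mpr hμ)
      (by linear_combination (2 ^ (n - 1) : ℂ) * Complex.I_sq) (by ring) v
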